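/- Let R ⊇ ℚ be a field and Y, Z ∈ H⟦ℏ⟧[[Q]] such that Y(x=α_i,ℏ,Q) ∈ R_α(ℏ)[[Q]] for every i ∈ {1,…,n}, Z is recursive, and the pair (Y,Z) satisfies the MPC. Then Z̄ := (x + ℏ Q d/dQ) Z is recursive and the pair (Y, Z̄) satisfies the MPC. -/

import Mathlib

open Finset

noncomputable section

namespace Stmt1

variable (n : ℕ) (R : Type) [Field R] [Algebra ℚ R]

/-- The multiplicative set of (images in `R[α_1,…,α_n]` of) nonzero elements of
`ℚ[α_1,…,α_n]`. -/
def qSet : Submonoid (MvPolynomial (Fin n) R) :=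
  Submonoid.map (MvPolynomial.map (algebraMap ℚ R) : MvPolynomial (Fin n) ℚ →+* _).toMonoidHom
    (nonZeroDivisors (MvPolynomial (Fin n) ℚ))

/-- `R_α`: the localization of `R[α_1,…,α_n]` at the nonzero elements of `ℚ[α_1,…,α_n]`. -/
abbrev Ra := Localization (qSet n R)

/-- `H = R[α_1,…,α_n, x]/((x-α_1)⋯(x-α_n))`, realized as a quotient of the polynomial
ring on the variables `α_i` (`some i`) and `x` (`none`). -/
abbrev Hring := MvPolynomial (Option (Fin n)) R ⧸
  Ideal.span ({∏ i : Fin n,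
      (MvPolynomial.X (none : Option (Fin n)) - MvPolynomial.X (some i))} :
    Set (MvPolynomial (Option (Fin n)) R))

/-- The canonical map `R[α] → R_α`. -/
def toRa : MvPolynomial (Fin n) R →+* Ra n R := algebraMap _ _

/-- The indeterminates `α_i` as elements of `R_α`. -/
def aR (i : Fin n) : Ra n R := toRa n R (MvPolynomial.X i)

/-- The canonical map `ℚ → R_α`. -/
def qmap : ℚ →+* Ra n R :=
  (toRa n R).comp ((MvPolynomial.C).comp (algebraMap ℚ R))

/-- Evaluation `x = α_i : H → R_α`. -/
def evH (i : Fin n) : Hring n R →+* Ra n R :=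
  Ideal.Quotient.lift _
    (MvPolynomial.eval₂Hom ((toRa n R).comp MvPolynomial.C)
      (fun v => match v with
        | none => aR n R i
        | some k => aR n R k)) (by
    intro f hf
    rw [Ideal.mem_span_singleton] at hf
    obtain ⟨g, rfl⟩ := hf
    rw [map_mul]
    have h0 : (MvPolynomial.eval₂Hom ((toRa n R).comp MvPolynomial.C)
        (fun v : Option (Fin n) => match v with
          | none => aR n R i
          | some k => aR n R k))
        (∏ j : Fin n,
          (MvPolynomial.X (none : Option (Fin n)) - MvPolynomial.X (some j))) = 0 := by
      rw [map_prod]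
      refine Finset.prod_eq_zero (Finset.mem_univ i) ?_
      simp
    rw [h0, zero_mul])

/-- Coefficientwise application of a ring homomorphism to a Laurent series. -/
def mapLS {A B : Type*} [CommRing A] [CommRing B] (f : A →+* B)
    (x : LaurentSeries A) : LaurentSeries B where
  coeff := fun g => f (x.coeff g)
  isPWO_support' := x.isPWO_support'.mono (by
    intro g hg
    simp only [Function.mem_support] at hg ⊢
    exact fun h0 => hg (by rw [h0, map_zero]))

/-- Evaluation at `x = α_i` of an element of `H⟦ℏ⟧[[Q]]` (given by its `Q`-coefficients). -/
def ZE (Z : ℕ → LaurentSeries (Hring n R)) (i : Fin n) : ℕ → LaurentSeries (Ra n R) :=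
  fun d => mapLS (evH n R i) (Z d)

/-- The Laurent-series expansion (at `ℏ⁻¹ = 0`) of a polynomial in `ℏ`; the variable of
`LaurentSeries` is `X = ℏ⁻¹`. -/
def hEv : Polynomial (Ra n R) →+* LaurentSeries (Ra n R) :=
  Polynomial.eval₂RingHom HahnSeries.C (HahnSeries.single (-1 : ℤ) (1 : Ra n R))

/-- `f` is the Laurent expansion at `ℏ⁻¹ = 0` of the rational function `p/q` of `ℏ`. -/
def IsExp (f : LaurentSeries (Ra n R)) (p q : Polynomial (Ra n R)) : Prop :=
  hEv n R q * f = hEv n R p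

/-- `f` lies in (the image of) `R_α(ℏ)`. -/
def MemRat (f : LaurentSeries (Ra n R)) : Prop :=
  ∃ p q : Polynomial (Ra n R), q ≠ 0 ∧ IsExp n R f p q

/-- `f ∈ R_α(ℏ)` is regular at `ℏ = c`. -/
def RegAt (f : LaurentSeries (Ra n R)) (c : Ra n R) : Prop :=
  ∃ p q : Polynomial (Ra n R), IsUnit (Polynomial.eval c q) ∧ IsExp n R f p q

open Classical in
/-- The value at `ℏ = c` of (the rational function represented by) `f`. -/
def evalAt (f : LaurentSeries (Ra n R)) (c : Ra n R) : Ra n R :=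
  if h : RegAt n R f c then
    Polynomial.eval c h.choose * Ring.inverse (Polynomial.eval c h.choose_spec.choose)
  else 0

/-- `f` is a Laurent polynomial in `ℏ`, i.e. lies in `R_α[ℏ, ℏ⁻¹]`. -/
def IsLaurentPoly (f : LaurentSeries (Ra n R)) : Prop :=
  (Function.support f.coeff).Finite

/-- The expansion in `⟦ℏ⟧` of `1/(ℏ - c)`. -/
def oneOverHbarSub (c : Ra n R) : LaurentSeries (Ra n R) :=
  (HahnSeries.ofPowerSeries ℤ (Ra n R))
    (PowerSeries.mk fun k => if k = 0 then 0 else c ^ (k - 1))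

/-- `C`-recursivity (Definition 4.1), expressed in terms of the evaluations
`W i = Z(x = α_i, ℏ, Q)`. -/
def CRec (Cc : ℕ → Fin n → Fin n → Ra n R) (W : Fin n → ℕ → LaurentSeries (Ra n R)) : Prop :=
  ∀ dstar : ℕ,
    (∀ d, 1 ≤ d → d ≤ dstar → ∀ i, MemRat n R (W i (dstar - d))) →
    (∀ d, 1 ≤ d → d < dstar → ∀ i j : Fin n, i ≠ j →
      RegAt n R (W i d) ((aR n R i - aR n R j) * Ring.inverse ((d : ℕ) : Ra n R))) →
    ∀ i : Fin n,
      IsLaurentPoly n R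
        (W i dstar - ∑ d ∈ Icc 1 dstar, ∑ j ∈ univ.erase i,
          HahnSeries.C (Cc d i j) *
            oneOverHbarSub n R ((aR n R j - aR n R i) * Ring.inverse ((d : ℕ) : Ra n R)) *
            HahnSeries.C (evalAt n R (W j (dstar - d))
              ((aR n R j - aR n R i) * Ring.inverse ((d : ℕ) : Ra n R))))

/-- Recursivity: `C`-recursivity for some collection `C` of elements of `R_α`. -/
def Recursive (W : Fin n → ℕ → LaurentSeries (Ra n R)) : Prop :=
  ∃ Cc : ℕ → Fin n → Fin n → Ra n R, CRec n R Cc W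

/-- Negation substitution `ℏ ↦ -ℏ` on Laurent series in `ℏ⁻¹`. -/
def negSubst (f : LaurentSeries (Ra n R)) : LaurentSeries (Ra n R) where
  coeff := fun e => ((Int.negOnePow e : ℤˣ) : ℤ) • f.coeff e
  isPWO_support' := f.isPWO_support'.mono (by
    intro e he
    simp only [Function.mem_support] at he ⊢
    exact fun h0 => he (by rw [h0]; simp))

/-- The coefficient of `z^A Q^b` in
`Φ_{Y,Z}(ℏ,z,Q) = Σ_i (e^{α_i z}/∏_{k≠i}(α_i-α_k)) Y(α_i,ℏ,Q e^{ℏz}) Z(α_i,-ℏ,Q)`,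
in terms of the evaluations `WY i = Y(x=α_i,·,·)`, `WZ i = Z(x=α_i,·,·)`. -/
def PhiCoef (WY WZ : Fin n → ℕ → LaurentSeries (Ra n R)) (A b : ℕ) : LaurentSeries (Ra n R) :=
  ∑ i : Fin n,
    HahnSeries.C (Ring.inverse (∏ k ∈ univ.erase i, (aR n R i - aR n R k))) *
      ∑ dd ∈ Finset.HasAntidiagonal.antidiagonal b, ∑ kk ∈ Finset.HasAntidiagonal.antidiagonal A,
        HahnSeries.C (qmap n R ((1 : ℚ) / kk.1.factorial / kk.2.factorial) *
            aR n R i ^ kk.1 * ((dd.1 : ℕ) : Ra n R) ^ kk.2) *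
          (HahnSeries.single (-1 : ℤ) (1 : Ra n R)) ^ kk.2 *
          WY i dd.1 * negSubst n R (WZ i dd.2)

/-- The mutual polynomiality condition: `Φ_{Y,Z} ∈ R_α[ℏ][[z,Q]]`. -/
def MPC (WY WZ : Fin n → ℕ → LaurentSeries (Ra n R)) : Prop :=
  ∀ A b : ℕ, ∃ p : Polynomial (Ra n R), PhiCoef n R WY WZ A b = hEv n R p

end Stmt1

namespace Stmt1

/-- The class of `x` in `H = R[α,x]/((x-α_1)⋯(x-α_n))`. -/
def xH (n : ℕ) (R : Type) [Field R] [Algebra ℚ R] : Hring n R :=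
  Ideal.Quotient.mk _ (MvPolynomial.X (none : Option (Fin n)))

/-- The transform `Z̄ = (x + ℏ Q d/dQ) Z`, coefficientwise in `Q`. -/
def Zbar (n : ℕ) (R : Type) [Field R] [Algebra ℚ R]
    (Z : ℕ → LaurentSeries (Hring n R)) : ℕ → LaurentSeries (Hring n R) :=
  fun d => HahnSeries.C (xH n R) * Z d +
    HahnSeries.C ((d : ℕ) : Hring n R) *
      ((HahnSeries.single (-1 : ℤ) (1 : Hring n R) : LaurentSeries (Hring n R)) * Z d)

/-!
Evaluated at `x = α_i`, the operator `x + ℏ Q d/dQ` multiplies the coefficient of `Q^d` by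
`α_i + dℏ`.

Recursivity holds with the same collection `C`. Rationality and regularity of the coefficients
of `Z̄` pass to those of `Z`, because the factors `α_j + mℏ` are nonzero and at the points
`ℏ = (α_j - α_i)/d` take the values `((d + m)α_j - mα_i)/d`, units of `R_α`. For `m = d* - d`
this value is `α_i + d*c` with `c = (α_j - α_i)/d`, and
`(α_i + d*ℏ)/(ℏ - c) = (α_i + d*c)/(ℏ - c) + d*`, so the recursion remainder of `Z̄` is
`α_i + d*ℏ` times that of `Z`, plus a constant.

For the MPC, `Z̄(α_i, -ℏ, Q) = (α_i - ℏ Q d/dQ) Z(α_i, -ℏ, Q)` gives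
`Φ_{Y,Z̄} = (∂_z - ℏ Q ∂_Q) Φ_{Y,Z}`, which preserves polynomiality in `ℏ`.
-/

open scoped Cardinal

local notation "ℏ" => (HahnSeries.single (-1 : ℤ) 1 : LaurentSeries _)

instance : Fact (ℵ₀ ≤ ℵ₀) := ⟨le_rfl⟩

section

variable {A : Type*} [CommRing A]

lemma coeff_C_mul (c : A) (x : LaurentSeries A) (e : ℤ) :
    (HahnSeries.C c * x).coeff e = c * x.coeff e := by
  rw [HahnSeries.C_mul_eq_smul, HahnSeries.coeff_smul, smul_eq_mul]

lemma coeff_hbar_mul (x : LaurentSeries A) (e : ℤ) : (ℏ * x).coeff e = x.coeff (e + 1) := by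
  simpa using HahnSeries.coeff_single_mul_add (r := (1 : A)) (x := x) (a := e + 1) (b := -1)

end

lemma sum_antidiagonal_inv_factorial_mul_pow {S : Type*} [CommRing S] (φ : ℚ →+* S) (x y : S)
    (A : ℕ) :
    ∑ kk ∈ antidiagonal A, φ (1 / kk.1.factorial / kk.2.factorial) * x ^ kk.1 * y ^ kk.2
      = φ (1 / A.factorial) * (x + y) ^ A := by
  rw [(Commute.all x y).add_pow', Finset.mul_sum]
  refine Finset.sum_congr rfl fun kk hkk => ?_
  obtain rfl := Finset.HasAntidiagonal.mem_antidiagonal.mp hkk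
  rw [nsmul_eq_mul, ← map_natCast φ, ← mul_assoc, ← map_mul, Nat.cast_add_choose, mul_assoc]
  congr 2
  field_simp

section

variable (n : ℕ) (R : Type) [Field R] [Algebra ℚ R]

abbrev laurentPolySubring : Subring (LaurentSeries (Ra n R)) :=
  HahnSeries.cardSuppLTSubring ℤ (Ra n R) ℵ₀

lemma isLaurentPoly_iff_mem {f : LaurentSeries (Ra n R)} :
    IsLaurentPoly n R f ↔ f ∈ laurentPolySubring n R :=
  Cardinal.lt_aleph0_iff_set_finite.symm

lemma C_mem_laurentPolySubring (c : Ra n R) : HahnSeries.C c ∈ laurentPolySubring n R :=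
  (HahnSeries.cardSupp_single_le 0 c).trans_lt Cardinal.one_lt_aleph0

lemma hbar_mem_laurentPolySubring : ℏ ∈ laurentPolySubring n R :=
  (HahnSeries.cardSupp_single_le _ _).trans_lt Cardinal.one_lt_aleph0

lemma coeff_oneOverHbarSub (c : Ra n R) (e : ℤ) :
    (oneOverHbarSub n R c).coeff e = if 1 ≤ e then c ^ (e - 1).toNat else 0 := by
  rcases lt_or_ge e 0 with he | he
  · rw [oneOverHbarSub, HahnSeries.ofPowerSeries_apply, HahnSeries.embDomain_of_notMem_range,
      if_neg (by omega)]
    rintro ⟨m, hm⟩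
    simp at hm
    omega
  · lift e to ℕ using he
    rw [oneOverHbarSub, HahnSeries.ofPowerSeries_apply_coeff, PowerSeries.coeff_mk]
    rcases e with _ | e <;> simp

lemma hbar_mul_oneOverHbarSub (c : Ra n R) :
    ℏ * oneOverHbarSub n R c = 1 + HahnSeries.C c * oneOverHbarSub n R c := by
  ext e
  rw [coeff_hbar_mul, HahnSeries.coeff_add, coeff_C_mul, coeff_oneOverHbarSub,
    coeff_oneOverHbarSub, HahnSeries.coeff_one]
  rcases lt_trichotomy e 0 with he | rfl | he
  · simp [show ¬ (1 : ℤ) ≤ e + 1 by omega, show ¬ (1 : ℤ) ≤ e by omega, he.ne]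
  · simp
  · rw [if_pos (by omega), if_pos (show 1 ≤ e from he), if_neg he.ne',
      show (e + 1 - 1).toNat = (e - 1).toNat + 1 by omega, pow_succ', zero_add]

lemma qSet_le_nonZeroDivisors : qSet n R ≤ nonZeroDivisors (MvPolynomial (Fin n) R) := by
  rintro _ ⟨p, hp, rfl⟩
  refine mem_nonZeroDivisors_of_ne_zero fun h => nonZeroDivisors.ne_zero hp ?_
  exact MvPolynomial.map_injective _ (algebraMap ℚ R).injective (by simpa using h)

instance : IsDomain (Ra n R) := IsLocalization.isDomain_localization (qSet_le_nonZeroDivisors n R)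

lemma isUnit_toRa_map {p : MvPolynomial (Fin n) ℚ} (hp : p ≠ 0) :
    IsUnit (toRa n R (MvPolynomial.map (algebraMap ℚ R) p)) :=
  IsLocalization.map_units (Ra n R) (⟨_, p, mem_nonZeroDivisors_of_ne_zero hp, rfl⟩ : qSet n R)

lemma toRa_X (i : Fin n) : toRa n R (MvPolynomial.X i) = aR n R i := rfl

lemma aR_ne_zero (i : Fin n) : aR n R i ≠ 0 := by
  simpa only [MvPolynomial.map_X, toRa_X] using
    (isUnit_toRa_map n R (MvPolynomial.X_ne_zero i)).ne_zero

lemma isUnit_natCast {d : ℕ} (hd : d ≠ 0) : IsUnit (d : Ra n R) := by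
  simpa using isUnit_toRa_map n R (p := d) (Nat.cast_ne_zero.mpr hd)

lemma natCast_mul_mul_inverse {d : ℕ} (hd : d ≠ 0) (x : Ra n R) :
    (d : Ra n R) * (x * Ring.inverse (d : Ra n R)) = x := by
  rw [mul_comm x, Ring.mul_inverse_cancel_left _ _ (isUnit_natCast n R hd)]

lemma isUnit_aR_add_mul {p q : Fin n} (hpq : p ≠ q) {d : ℕ} (hd : d ≠ 0) (m : ℕ) :
    IsUnit (aR n R p + m * ((aR n R p - aR n R q) * Ring.inverse (d : Ra n R))) := by
  have key : (d : Ra n R) * (aR n R p + m * ((aR n R p - aR n R q) * Ring.inverse (d : Ra n R)))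
      = toRa n R (MvPolynomial.map (algebraMap ℚ R)
          (((d + m : ℕ) : MvPolynomial (Fin n) ℚ) * MvPolynomial.X p -
            (m : MvPolynomial (Fin n) ℚ) * MvPolynomial.X q)) := by
    simp only [map_sub, map_mul, map_add, map_natCast, MvPolynomial.map_X, Nat.cast_add, toRa_X]
    linear_combination (m : Ra n R) * natCast_mul_mul_inverse n R hd (aR n R p - aR n R q)
  refine isUnit_of_mul_isUnit_right (key ▸ isUnit_toRa_map n R fun h => ?_)
  have := congrArg (MvPolynomial.eval (Pi.single p 1)) h
  simp [hpq.symm] at this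
  norm_cast at this
  omega

lemma hEv_C (a : Ra n R) : hEv n R (Polynomial.C a) = HahnSeries.C a :=
  Polynomial.eval₂_C _ _

lemma hEv_X : hEv n R Polynomial.X = ℏ :=
  Polynomial.eval₂_X _ _

lemma coeff_hEv (p : Polynomial (Ra n R)) (k : ℕ) : (hEv n R p).coeff (-k) = p.coeff k := by
  induction p using Polynomial.induction_on' with
  | add p q hp hq => rw [map_add, HahnSeries.coeff_add, hp, hq, Polynomial.coeff_add]
  | monomial m a =>
    rw [← Polynomial.C_mul_X_pow_eq_monomial, map_mul, map_pow, hEv_C, hEv_X,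
      HahnSeries.single_pow, one_pow, coeff_C_mul, HahnSeries.coeff_single,
      Polynomial.coeff_C_mul_X_pow]
    simp

lemma hEv_injective : Function.Injective (hEv n R) := fun p q h => by
  ext k
  rw [← coeff_hEv, ← coeff_hEv, h]

variable {n R}

lemma IsExp.hEv_mul {f : LaurentSeries (Ra n R)} {p q : Polynomial (Ra n R)}
    (h : IsExp n R f p q) (g : Polynomial (Ra n R)) : IsExp n R (hEv n R g * f) (g * p) q := by
  rw [IsExp, map_mul, ← h]
  ring

lemma IsExp.of_hEv_mul {f : LaurentSeries (Ra n R)} {g p q : Polynomial (Ra n R)}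
    (h : IsExp n R (hEv n R g * f) p q) : IsExp n R f p (q * g) := by
  rw [IsExp, map_mul, mul_assoc, h]

lemma MemRat.of_hEv_mul {f : LaurentSeries (Ra n R)} {g : Polynomial (Ra n R)} (hg : g ≠ 0)
    (h : MemRat n R (hEv n R g * f)) : MemRat n R f :=
  let ⟨p, q, hq, hpq⟩ := h
  ⟨p, q * g, mul_ne_zero hq hg, hpq.of_hEv_mul⟩

lemma RegAt.of_hEv_mul {f : LaurentSeries (Ra n R)} {g : Polynomial (Ra n R)} {c : Ra n R}
    (hg : IsUnit (g.eval c)) (h : RegAt n R (hEv n R g * f) c) : RegAt n R f c :=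
  let ⟨p, q, hq, hpq⟩ := h
  ⟨p, q * g, by rw [Polynomial.eval_mul]; exact hq.mul hg, hpq.of_hEv_mul⟩

lemma evalAt_eq {f : LaurentSeries (Ra n R)} {p q : Polynomial (Ra n R)} {c : Ra n R}
    (hq : IsUnit (q.eval c)) (h : IsExp n R f p q) :
    evalAt n R f c = p.eval c * Ring.inverse (q.eval c) := by
  have hreg : RegAt n R f c := ⟨p, q, hq, h⟩
  obtain ⟨hq', h'⟩ := hreg.choose_spec.choose_spec
  rw [evalAt, dif_pos hreg]
  set p' := hreg.choose
  set q' := hreg.choose_spec.choose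
  -- both `p / q` and `p' / q'` expand to `f`, so `q p' = q' p` since `hEv` is injective
  have hcross : (q * p').eval c = (q' * p).eval c := by
    congr 1
    apply hEv_injective n R
    rw [map_mul, map_mul, ← h', ← h]
    ring
  rw [Polynomial.eval_mul, Polynomial.eval_mul] at hcross
  obtain ⟨u, hu⟩ := hq
  obtain ⟨u', hu'⟩ := hq'
  rw [← hu, ← hu'] at hcross
  rw [← hu, ← hu', Ring.inverse_unit, Ring.inverse_unit, Units.eq_mul_inv_iff_mul_eq,
    mul_right_comm, Units.mul_inv_eq_iff_eq_mul]
  linear_combination hcross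

lemma evalAt_hEv_mul {f : LaurentSeries (Ra n R)} {g : Polynomial (Ra n R)} {c : Ra n R}
    (hg : IsUnit (g.eval c)) : evalAt n R (hEv n R g * f) c = g.eval c * evalAt n R f c := by
  by_cases h : RegAt n R f c
  · obtain ⟨p, q, hq, hpq⟩ := h
    rw [evalAt_eq hq hpq, evalAt_eq hq (hpq.hEv_mul g), Polynomial.eval_mul, mul_assoc]
  · rw [evalAt, dif_neg (fun h' => h (h'.of_hEv_mul hg)), evalAt, dif_neg h, mul_zero]

variable (n R) in
/-- The operator `x + ℏ Q d/dQ` on the evaluations `W i d = [[Z(x = α_i)]]_{Q;d}`. -/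
def zbarOp (W : Fin n → ℕ → LaurentSeries (Ra n R)) :
    Fin n → ℕ → LaurentSeries (Ra n R) :=
  fun i d => hEv n R (Polynomial.C (aR n R i) + Polynomial.C (d : Ra n R) * Polynomial.X) * W i d

lemma hEv_C_add_C_mul_X (a m : Ra n R) :
    hEv n R (Polynomial.C a + Polynomial.C m * Polynomial.X)
      = HahnSeries.C a + HahnSeries.C m * ℏ := by
  rw [map_add, map_mul, hEv_C, hEv_C, hEv_X]

lemma C_add_C_mul_X_ne_zero (i : Fin n) (m : Ra n R) :
    Polynomial.C (aR n R i) + Polynomial.C m * Polynomial.X ≠ 0 := fun h =>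
  aR_ne_zero n R i <| by simpa using congrArg (Polynomial.coeff · 0) h

lemma C_add_mul_mul_oneOverHbarSub (a m c : Ra n R) :
    HahnSeries.C (a + m * c) * oneOverHbarSub n R c
      = (HahnSeries.C a + HahnSeries.C m * ℏ) * oneOverHbarSub n R c - HahnSeries.C m := by
  rw [add_mul, mul_assoc, hbar_mul_oneOverHbarSub, map_add, map_mul]
  ring

lemma C_mul_oneOverHbarSub_mul_C_evalAt_zbarOp (W : Fin n → ℕ → LaurentSeries (Ra n R))
    (κ c : Ra n R) {i j : Fin n} {d dstar : ℕ} (hdd : d ≤ dstar)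
    (hc : (d : Ra n R) * c = aR n R j - aR n R i)
    (hunit : IsUnit (aR n R j + ((dstar - d : ℕ) : Ra n R) * c)) :
    HahnSeries.C κ * oneOverHbarSub n R c *
        HahnSeries.C (evalAt n R (zbarOp n R W j (dstar - d)) c)
      = (HahnSeries.C (aR n R i) + HahnSeries.C (dstar : Ra n R) * ℏ) *
          (HahnSeries.C κ * oneOverHbarSub n R c * HahnSeries.C (evalAt n R (W j (dstar - d)) c))
        - HahnSeries.C (κ * dstar * evalAt n R (W j (dstar - d)) c) := by
  have hval : aR n R j + ((dstar - d : ℕ) : Ra n R) * c = aR n R i + dstar * c := by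
    rw [Nat.cast_sub hdd]
    linear_combination -hc
  rw [zbarOp, evalAt_hEv_mul (by simpa using hunit), Polynomial.eval_add, Polynomial.eval_mul,
    Polynomial.eval_C, Polynomial.eval_C, Polynomial.eval_X, hval]
  calc _ = HahnSeries.C κ * HahnSeries.C (evalAt n R (W j (dstar - d)) c) *
        (HahnSeries.C (aR n R i + dstar * c) * oneOverHbarSub n R c) := by
        simp only [map_mul]
        ring
    _ = _ := by
        rw [C_add_mul_mul_oneOverHbarSub]
        simp only [map_mul]
        ring

theorem CRec.zbarOp {Cc : ℕ → Fin n → Fin n → Ra n R}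
    {W : Fin n → ℕ → LaurentSeries (Ra n R)} (h : CRec n R Cc W) :
    CRec n R Cc (zbarOp n R W) := by
  intro dstar hA hB i
  have hA' : ∀ d, 1 ≤ d → d ≤ dstar → ∀ k, MemRat n R (W k (dstar - d)) :=
    fun d h1 h2 k => (hA d h1 h2 k).of_hEv_mul (C_add_C_mul_X_ne_zero k _)
  have hB' : ∀ d, 1 ≤ d → d < dstar → ∀ k j : Fin n, k ≠ j →
      RegAt n R (W k d) ((aR n R k - aR n R j) * Ring.inverse (d : Ra n R)) :=
    fun d h1 h2 k j hkj => (hB d h1 h2 k j hkj).of_hEv_mul (by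
      simpa using isUnit_aR_add_mul n R hkj (d := d) (by omega) d)
  have hG :
      HahnSeries.C (aR n R i) + HahnSeries.C (dstar : Ra n R) * ℏ ∈ laurentPolySubring n R :=
    add_mem (C_mem_laurentPolySubring n R _)
      (mul_mem (C_mem_laurentPolySubring n R _) (hbar_mem_laurentPolySubring n R))
  have hres := h dstar hA' hB' i
  rw [isLaurentPoly_iff_mem] at hres ⊢
  convert add_mem (mul_mem hG hres) (sum_mem (t := Icc 1 dstar) fun d _ =>
    sum_mem (t := univ.erase i) fun j _ => C_mem_laurentPolySubring n R (Cc d i j * dstar *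
      evalAt n R (W j (dstar - d)) ((aR n R j - aR n R i) * Ring.inverse (d : Ra n R)))) using 1
  rw [Finset.sum_congr rfl fun d hd => Finset.sum_congr rfl fun j hj => by
    obtain ⟨hd1, hd2⟩ := Finset.mem_Icc.mp hd
    exact C_mul_oneOverHbarSub_mul_C_evalAt_zbarOp W _ _ hd2
      (natCast_mul_mul_inverse n R (by omega) _)
      (isUnit_aR_add_mul n R (Finset.ne_of_mem_erase hj) (by omega) _)]
  simp only [Finset.sum_sub_distrib (G := LaurentSeries (Ra n R)), ← Finset.mul_sum, Stmt1.zbarOp,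
    hEv_C_add_C_mul_X]
  ring

lemma negSubst_zbarOp (W : Fin n → ℕ → LaurentSeries (Ra n R)) (i : Fin n) (d : ℕ) :
    negSubst n R (zbarOp n R W i d)
      = (HahnSeries.C (aR n R i) - HahnSeries.C (d : Ra n R) * ℏ) * negSubst n R (W i d) := by
  ext e
  rw [zbarOp, hEv_C_add_C_mul_X, sub_mul (α := LaurentSeries (Ra n R))]
  simp only [negSubst, add_mul, mul_assoc, HahnSeries.coeff_add, HahnSeries.coeff_sub,
    coeff_C_mul, coeff_hbar_mul, Int.negOnePow_succ, Units.val_neg, Int.cast_neg, zsmul_eq_mul]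
  ring

-- The `kk`-sum in `PhiCoef` is the `z^A`-coefficient of `e^{α_i z} e^{d₁ℏz}`.
lemma phiCoef_eq (WY WZ : Fin n → ℕ → LaurentSeries (Ra n R)) (A b : ℕ) :
    PhiCoef n R WY WZ A b = ∑ i : Fin n,
      HahnSeries.C (Ring.inverse (∏ k ∈ univ.erase i, (aR n R i - aR n R k))) *
        ∑ dd ∈ antidiagonal b, HahnSeries.C (qmap n R (1 / A.factorial)) *
          (HahnSeries.C (aR n R i) + HahnSeries.C (dd.1 : Ra n R) * ℏ) ^ A *
          WY i dd.1 * negSubst n R (WZ i dd.2) := by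
  refine Finset.sum_congr rfl fun i _ => congrArg _ (Finset.sum_congr rfl fun dd _ => ?_)
  have h := sum_antidiagonal_inv_factorial_mul_pow (HahnSeries.C.comp (qmap n R))
    (HahnSeries.C (aR n R i)) (HahnSeries.C (dd.1 : Ra n R) * ℏ) A
  simp only [RingHom.comp_apply] at h
  rw [← h, Finset.sum_mul, Finset.sum_mul]
  refine Finset.sum_congr rfl fun kk _ => ?_
  simp only [map_mul, map_pow]
  ring

lemma phiCoef_zbarOp (WY WZ : Fin n → ℕ → LaurentSeries (Ra n R)) (A b : ℕ) :
    PhiCoef n R WY (zbarOp n R WZ) A b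
      = HahnSeries.C ((A + 1 : ℕ) : Ra n R) * PhiCoef n R WY WZ (A + 1) b
        - HahnSeries.C (b : Ra n R) * ℏ * PhiCoef n R WY WZ A b := by
  have hfac : qmap n R (1 / A.factorial)
      = ((A + 1 : ℕ) : Ra n R) * qmap n R (1 / (A + 1).factorial) := by
    rw [← map_natCast (qmap n R), ← map_mul, Nat.factorial_succ]
    congr 1
    push_cast
    field_simp
  simp only [phiCoef_eq, Finset.mul_sum, ← Finset.sum_sub_distrib (G := LaurentSeries (Ra n R))]
  refine Finset.sum_congr rfl fun i _ => Finset.sum_congr rfl fun dd hdd => ?_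
  rw [negSubst_zbarOp, hfac, ← Finset.HasAntidiagonal.mem_antidiagonal.mp hdd]
  simp only [Nat.cast_add, map_mul, map_add]
  ring

theorem MPC.zbarOp {WY WZ : Fin n → ℕ → LaurentSeries (Ra n R)} (h : MPC n R WY WZ) :
    MPC n R WY (zbarOp n R WZ) := by
  intro A b
  obtain ⟨p₁, hp₁⟩ := h (A + 1) b
  obtain ⟨p₂, hp₂⟩ := h A b
  refine ⟨Polynomial.C ((A + 1 : ℕ) : Ra n R) * p₁
    - Polynomial.C (b : Ra n R) * Polynomial.X * p₂, ?_⟩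
  rw [phiCoef_zbarOp, hp₁, hp₂, map_sub (hEv n R), map_mul, map_mul, map_mul, hEv_C, hEv_C,
    hEv_X]

lemma ZE_Zbar (Z : ℕ → LaurentSeries (Hring n R)) :
    ZE n R (Zbar n R Z) = zbarOp n R (ZE n R Z) := by
  ext i d e
  have hx : evH n R i (xH n R) = aR n R i := by simp [xH, evH]
  rw [zbarOp, hEv_C_add_C_mul_X]
  simp only [ZE, Zbar, mapLS, add_mul, mul_assoc, HahnSeries.coeff_add,
    coeff_C_mul, coeff_hbar_mul, map_add, map_mul, hx]
  rw [map_natCast]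

end

theorem stmt2_general (n : ℕ) (R : Type) [Field R] [Algebra ℚ R]
    (Y Z : ℕ → LaurentSeries (Hring n R))
    (hZ : Recursive n R (ZE n R Z))
    (hMPC : MPC n R (ZE n R Y) (ZE n R Z)) :
    Recursive n R (ZE n R (Zbar n R Z)) ∧ MPC n R (ZE n R Y) (ZE n R (Zbar n R Z)) := by
  obtain ⟨Cc, hCc⟩ := hZ
  rw [ZE_Zbar]
  exact ⟨⟨Cc, CRec.zbarOp hCc⟩, MPC.zbarOp hMPC⟩

/-- Lemma 4.4(i): if `Y(x=α_i,ℏ,Q) ∈ R_α(ℏ)[[Q]]` for all `i`, `Z` is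
recursive, and `(Y,Z)` satisfies the MPC, then `Z̄ = (x + ℏ Q d/dQ) Z` is recursive and
`(Y, Z̄)` satisfies the MPC. -/
theorem stmt2 (n : ℕ) (hn : 2 ≤ n) (R : Type) [Field R] [Algebra ℚ R]
    (Y Z : ℕ → LaurentSeries (Hring n R))
    (hY : ∀ i : Fin n, ∀ d, MemRat n R (ZE n R Y i d))
    (hZ : Recursive n R (ZE n R Z))
    (hMPC : MPC n R (ZE n R Y) (ZE n R Z)) :
    Recursive n R (ZE n R (Zbar n R Z)) ∧ MPC n R (ZE n R Y) (ZE n R (Zbar n R Z)) :=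
  stmt2_general n R Y Z hZ hMPC

end Stmt1
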